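/- Let n ≥ 1, s > -1 and let k ≥ 0, p ≥ 1, q ≥ 1 be integers. Then the integral c_{pq,n+k}(s) := ∫₀¹ t^{n-1}(1-t)^s [(2t d/dt)^{n+k} (t^{(p+q)/2} S_pq(t))]² dt is finite if and only if s > 2k - 1. -/

import Mathlib

open MeasureTheory ENNReal NNReal

/-- Pochhammer symbol `(a)_k = Γ(a+k)/Γ(a)`. -/
noncomputable def poch (a : ℝ) (k : ℕ) : ℝ := Real.Gamma (a + k) / Real.Gamma a

/-- Gauss hypergeometric function `₂F₁(a,b;c;t)`, as a sum of its series. -/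
noncomputable def hyp2F1 (a b c t : ℝ) : ℝ :=
  ∑' k : ℕ, (poch a k * poch b k) / (poch c k * (Nat.factorial k)) * t ^ k

/-- `S_pq(t)`. -/
noncomputable def Spq (n p q : ℕ) (t : ℝ) : ℝ :=
  (Real.Gamma (n + p) * Real.Gamma (n + q)) / (Real.Gamma n * Real.Gamma ((n : ℝ) + p + q)) *
    hyp2F1 p q ((p : ℝ) + q + n) t

/-- `c_pq(s)`. -/
noncomputable def cpq (n p q : ℕ) (s : ℝ) : ℝ :=
  poch (s + 1) n / Real.Gamma n *
    ∫ t in Set.Ioo (0:ℝ) 1, t ^ ((p : ℝ) + q + n - 1) * (1 - t) ^ s * (Spq n p q t) ^ 2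

/-- The operator `u(t) ↦ 2t u'(t)`. -/
noncomputable def opD (g : ℝ → ℝ) : ℝ → ℝ := fun t => 2 * t * deriv g t

/-- `c_{pq,k}(s) = ∫₀¹ t^{n-1}(1-t)^s [(2t d/dt)^k (t^{(p+q)/2} S_pq(t))]² dt`. -/
noncomputable def cpqk (n p q : ℕ) (s : ℝ) (k : ℕ) : ℝ :=
  ∫ t in Set.Ioo (0:ℝ) 1, t ^ ((n : ℝ) - 1) * (1 - t) ^ s *
    (opD^[k] (fun u => u ^ (((p : ℝ) + q) / 2) * Spq n p q u) t) ^ 2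

/-- `I_pqs(ν,k) = ∫₀¹ t^{p+q+ν-1+k}(1-t)^s ₂F₁(p,q;p+q+ν;t)² dt`. -/
noncomputable def Ipqs (p q : ℕ) (s : ℝ) (ν k : ℕ) : ℝ :=
  ∫ t in Set.Ioo (0:ℝ) 1, t ^ ((p : ℝ) + q + ν - 1 + k) * (1 - t) ^ s *
    (hyp2F1 p q ((p : ℝ) + q + ν) t) ^ 2

/-!
The coefficients of `S_pq t = ∑ x_j t ^ j` satisfy `x_j ≍ (j + 1) ^ (-(n + 1))`, and `2t d/dt`
multiplies `t ^ ((p + q) / 2 + j)` by `2j + p + q`. Hence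
`(2t d/dt) ^ (n + k) (t ^ ((p + q) / 2) S_pq) = t ^ ((p + q) / 2) ∑ a_j t ^ j` with
`(j + 1) a_j ≍ (j + 1) ^ k`. Comparison with `∑ C(j + K, K) t ^ j = (1 - t) ^ (-(K + 1))` (and, when
`k = 0`, with `∑ t ^ (j + 1) / (j + 1) = -log (1 - t)`) gives
`c (1 - t) ^ (-k) ≤ ∑ a_j t ^ j ≤ C_ε (1 - t) ^ (-k - ε)` for every `ε > 0`, so near `t = 1` the
integrand lies between multiples of `(1 - t) ^ (s - 2k)` and `(1 - t) ^ (s - 2k - 2ε)`.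
-/

open Set

lemma choose_add_le_succ_pow (j K : ℕ) : (j + K).choose K ≤ (j + 1) ^ K := by
  induction K with
  | zero => simp
  | succ K ih =>
    have key := Nat.add_one_mul_choose_eq (j + K) K
    refine Nat.le_of_mul_le_mul_right ?_ K.succ_pos
    calc (j + (K + 1)).choose (K + 1) * (K + 1) = (j + K + 1) * (j + K).choose K := by
          rw [key, ← add_assoc]
      _ ≤ ((K + 1) * (j + 1)) * (j + 1) ^ K := Nat.mul_le_mul (by nlinarith) ih
      _ = (j + 1) ^ (K + 1) * (K + 1) := by ring

lemma succ_pow_le_factorial_mul_choose (j K : ℕ) :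
    ((j : ℝ) + 1) ^ K ≤ K.factorial * ((j + K).choose K : ℝ) := by
  have h := Nat.pow_le_choose (α := ℝ) K (j + K)
  rw [show j + K + 1 - K = j + 1 by omega, div_le_iff₀ (by positivity)] at h
  push_cast at h
  linarith

section PowerSeries

variable {a : ℕ → ℝ} {C : ℝ} {d : ℕ}

lemma summable_mul_pow_of_abs_le (ha : ∀ j, |a j| ≤ C * ((j : ℝ) + 1) ^ d) {t : ℝ}
    (ht : |t| < 1) : Summable fun j => a j * t ^ j := by
  have hC : 0 ≤ C := by simpa using (abs_nonneg _).trans (ha 0)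
  refine .of_norm_bounded
    (((summable_choose_mul_geometric_of_norm_lt_one d (r := |t|) (by simpa)).mul_left
      (C * d.factorial))) fun j => ?_
  rw [norm_mul, norm_pow, Real.norm_eq_abs, Real.norm_eq_abs, ← mul_assoc, mul_assoc C]
  gcongr
  exact (ha j).trans (mul_le_mul_of_nonneg_left (succ_pow_le_factorial_mul_choose j d) hC)

lemma norm_mul_natCast_mul_pow_sub_one_le (ha : ∀ j, |a j| ≤ C * ((j : ℝ) + 1) ^ d) {r y : ℝ}
    (hr : 0 < r) (hy : |y| ≤ r) (j : ℕ) :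
    ‖a j * (j * y ^ (j - 1))‖ ≤ C / r * (((j : ℝ) + 1) ^ (d + 1) * r ^ j) := by
  have hC : 0 ≤ C := by simpa using (abs_nonneg _).trans (ha 0)
  rcases j with _ | j
  · simp only [CharP.cast_eq_zero, zero_mul, mul_zero, norm_zero]
    positivity
  rw [norm_mul, norm_mul, norm_pow, Real.norm_eq_abs, Real.norm_eq_abs, Real.norm_eq_abs,
    Nat.add_sub_cancel, Nat.abs_cast]
  calc |a (j + 1)| * (((j + 1 : ℕ) : ℝ) * |y| ^ j)
      ≤ (C * ((j + 1 : ℕ) + 1) ^ d) * (((j + 1 : ℕ) + 1) * r ^ j) := by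
        gcongr
        · exact ha (j + 1)
        · linarith
    _ = C / r * ((((j + 1 : ℕ) : ℝ) + 1) ^ (d + 1) * r ^ (j + 1)) := by
        field_simp
        ring

lemma hasDerivAt_tsum_mul_pow (ha : ∀ j, |a j| ≤ C * ((j : ℝ) + 1) ^ d) {t : ℝ}
    (ht : |t| < 1) :
    HasDerivAt (fun z => ∑' j, a j * z ^ j) (∑' j, a j * (j * t ^ (j - 1))) t := by
  obtain ⟨r, htr, hr1⟩ := exists_between ht
  have hr : 0 < r := (abs_nonneg t).trans_lt htr
  have hmem : t ∈ Ioo (-r) r := abs_lt.mp htr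
  have hu : Summable fun j : ℕ => C / r * (((j : ℝ) + 1) ^ (d + 1) * r ^ j) :=
    (summable_mul_pow_of_abs_le (a := fun j => ((j : ℝ) + 1) ^ (d + 1)) (C := 1)
      (fun j => by rw [one_mul, abs_of_nonneg (by positivity)])
      (by rwa [abs_of_pos hr])).mul_left _
  exact hasDerivAt_tsum_of_isPreconnected hu isOpen_Ioo isPreconnected_Ioo
    (fun j y _ => (hasDerivAt_pow j y).const_mul (a j))
    (fun j y hy => norm_mul_natCast_mul_pow_sub_one_le ha hr (abs_le.mpr ⟨hy.1.le, hy.2.le⟩) j)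
    hmem (summable_mul_pow_of_abs_le ha ht) hmem

lemma opD_congr {f g : ℝ → ℝ} {U : Set ℝ} (hU : IsOpen U) (h : EqOn f g U) :
    EqOn (opD f) (opD g) U := fun t ht => by
  simp only [opD, (h.eventuallyEq_of_mem (hU.mem_nhds ht)).deriv_eq]

lemma opD_iterate_congr {f g : ℝ → ℝ} {U : Set ℝ} (hU : IsOpen U) (h : EqOn f g U) (i : ℕ) :
    EqOn (opD^[i] f) (opD^[i] g) U := by
  induction i with
  | zero => exact h
  | succ i ih =>
    rw [Function.iterate_succ_apply', Function.iterate_succ_apply']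
    exact opD_congr hU ih

lemma eqOn_opD_rpow_mul_tsum (ha : ∀ j, |a j| ≤ C * ((j : ℝ) + 1) ^ d) (α : ℝ) :
    EqOn (opD fun u => u ^ α * ∑' j, a j * u ^ j)
      (fun t => t ^ α * ∑' j : ℕ, 2 * (j + α) * a j * t ^ j) (Ioo 0 1) := by
  rintro t ⟨ht0, ht1⟩
  have ht : |t| < 1 := abs_lt.mpr ⟨by linarith, ht1⟩
  have hC : 0 ≤ C := by simpa using (abs_nonneg _).trans (ha 0)
  have hs := summable_mul_pow_of_abs_le ha ht
  have hs' : Summable fun j : ℕ => (j : ℝ) * a j * t ^ j :=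
    summable_mul_pow_of_abs_le (C := C) (d := d + 1) (fun j => by
      rw [abs_mul, Nat.abs_cast, pow_succ]
      nlinarith [ha j, abs_nonneg (a j), (by positivity : (0 : ℝ) ≤ C * ((j : ℝ) + 1) ^ d)]) ht
  have hshift : t * ∑' j, a j * (j * t ^ (j - 1)) = ∑' j : ℕ, (j : ℝ) * a j * t ^ j := by
    rw [← _root_.tsum_mul_left]
    congr 1 with j
    rcases j with _ | j
    · simp
    · rw [Nat.add_sub_cancel, pow_succ]
      ring
  have hsplit : ∑' j : ℕ, 2 * (j + α) * a j * t ^ j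
      = 2 * ∑' j : ℕ, (j : ℝ) * a j * t ^ j + 2 * α * ∑' j, a j * t ^ j := by
    rw [← _root_.tsum_mul_left, ← _root_.tsum_mul_left,
      ← (hs'.mul_left 2).tsum_add (hs.mul_left (2 * α))]
    congr 1 with j
    ring
  have hD : HasDerivAt (fun u => u ^ α * ∑' j, a j * u ^ j)
      (α * t ^ (α - 1) * ∑' j, a j * t ^ j + t ^ α * ∑' j, a j * (j * t ^ (j - 1))) t :=
    (Real.hasDerivAt_rpow_const (Or.inl ht0.ne')).mul (hasDerivAt_tsum_mul_pow ha ht)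
  rw [opD, hD.deriv]
  dsimp only
  rw [hsplit, ← hshift, Real.rpow_sub_one ht0.ne']
  field_simp
  ring

lemma eqOn_opD_iterate_rpow_mul_tsum (ha : ∀ j, |a j| ≤ C * ((j : ℝ) + 1) ^ d) (α : ℝ) (i : ℕ) :
    EqOn (opD^[i] fun u => u ^ α * ∑' j, a j * u ^ j)
      (fun t => t ^ α * ∑' j : ℕ, (2 * (j + α)) ^ i * a j * t ^ j) (Ioo 0 1) := by
  induction i generalizing a C d with
  | zero => intro t _; simp
  | succ i ih =>
    have hC : 0 ≤ C := by simpa using (abs_nonneg _).trans (ha 0)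
    have ha' : ∀ j : ℕ, |2 * (j + α) * a j| ≤ 2 * (1 + |α|) * C * ((j : ℝ) + 1) ^ (d + 1) := by
      intro j
      have hj : |(j : ℝ) + α| ≤ (1 + |α|) * (j + 1) := by
        have := abs_add_le (j : ℝ) α
        rw [Nat.abs_cast] at this
        nlinarith [abs_nonneg α, j.cast_nonneg (α := ℝ)]
      calc |2 * (j + α) * a j| = 2 * |(j : ℝ) + α| * |a j| := by
            rw [abs_mul, abs_mul, abs_two]
        _ ≤ 2 * ((1 + |α|) * (j + 1)) * (C * ((j : ℝ) + 1) ^ d) := by gcongr; exact ha j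
        _ = _ := by ring
    intro t ht
    rw [Function.iterate_succ_apply,
      opD_iterate_congr isOpen_Ioo (eqOn_opD_rpow_mul_tsum ha α) i ht, ih ha' ht]
    simp only [pow_succ, mul_assoc]

end PowerSeries

lemma abs_le_of_succ_mul_le {a : ℕ → ℝ} {C : ℝ} {k : ℕ} (ha0 : ∀ j, 0 ≤ a j)
    (hhi : ∀ j : ℕ, ((j : ℝ) + 1) * a j ≤ C * ((j : ℝ) + 1) ^ k) (j : ℕ) :
    |a j| ≤ C * ((j : ℝ) + 1) ^ k := by
  rw [abs_of_nonneg (ha0 j)]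
  exact (le_mul_of_one_le_left (ha0 j) (by simp)).trans (hhi j)

lemma one_sub_rpow_neg_natCast {t : ℝ} (ht : t < 1) (K : ℕ) :
    (1 - t) ^ (-(K : ℝ)) = 1 / (1 - t) ^ K := by
  rw [Real.rpow_neg (by linarith), Real.rpow_natCast, one_div]

lemma mul_one_sub_rpow_neg_le_tsum {a : ℕ → ℝ} {c : ℝ} {k : ℕ} (hc : 0 ≤ c)
    (ha : ∀ j : ℕ, c * ((j : ℝ) + 1) ^ k ≤ ((j : ℝ) + 1) * a j) {t : ℝ} (ht0 : 0 ≤ t)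
    (ht1 : t < 1) (hs : Summable fun j => a j * t ^ j) :
    c * (1 - t) ^ (-(k : ℝ)) ≤ ∑' j, a j * t ^ j := by
  have ha' : ∀ j : ℕ, c * ((j : ℝ) + 1) ^ k / (j + 1) ≤ a j := fun j =>
    (div_le_iff₀' (by positivity)).mpr (ha j)
  rcases k with _ | K
  · have h0 : c ≤ a 0 := by simpa using ha' 0
    calc c * (1 - t) ^ (-((0 : ℕ) : ℝ)) = c := by simp
      _ ≤ a 0 * t ^ 0 := by simpa using h0
      _ ≤ ∑' j, a j * t ^ j := hs.le_tsum 0 fun j _ =>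
          mul_nonneg ((div_nonneg (by positivity) (by positivity)).trans (ha' j)) (by positivity)
  · have ht : ‖t‖ < 1 := by rwa [Real.norm_eq_abs, abs_of_nonneg ht0]
    rw [one_sub_rpow_neg_natCast ht1]
    refine hasSum_le (fun j => ?_) ((hasSum_choose_mul_geometric_of_norm_lt_one K ht).mul_left c)
      hs.hasSum
    rw [← mul_assoc]
    gcongr
    calc c * ((j + K).choose K : ℝ) ≤ c * ((j : ℝ) + 1) ^ K := by
          gcongr; exact_mod_cast choose_add_le_succ_pow j K
      _ = c * ((j : ℝ) + 1) ^ (K + 1) / (j + 1) := by field_simp; ring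
      _ ≤ a j := ha' j

-- The comparison series is `∑ t ^ (j + 1) / (j + 1) = -log (1 - t)`, hence the factor `t`.
lemma mul_tsum_le_div_mul_one_sub_rpow_neg {a : ℕ → ℝ} {C : ℝ} (ha0 : ∀ j, 0 ≤ a j)
    (ha : ∀ j : ℕ, ((j : ℝ) + 1) * a j ≤ C) {ε : ℝ} (hε : 0 < ε) {t : ℝ} (ht0 : 0 ≤ t)
    (ht1 : t < 1) :
    t * ∑' j, a j * t ^ j ≤ C / ε * (1 - t) ^ (-ε) := by
  have ht : |t| < 1 := by rwa [abs_of_nonneg ht0]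
  have hC : 0 ≤ C := (mul_nonneg (by positivity) (ha0 0)).trans (ha 0)
  have hs := summable_mul_pow_of_abs_le (abs_le_of_succ_mul_le (k := 0) ha0 (by simpa using ha)) ht
  have hlog : -Real.log (1 - t) ≤ (1 - t) ^ (-ε) / ε := by
    rw [← Real.log_inv, Real.rpow_neg (by linarith), ← Real.inv_rpow (by linarith)]
    exact Real.log_le_rpow_div (inv_pos.mpr (by linarith)).le hε
  calc t * ∑' j, a j * t ^ j ≤ C * -Real.log (1 - t) := by
        refine hasSum_le (fun j => ?_) (hs.hasSum.mul_left t)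
          ((Real.hasSum_pow_div_log_of_abs_lt_one ht).mul_left C)
        calc t * (a j * t ^ j) = a j * t ^ (j + 1) := by ring
          _ ≤ C / (j + 1) * t ^ (j + 1) := by
              gcongr; exact (le_div_iff₀' (by positivity)).mpr (ha j)
          _ = C * (t ^ (j + 1) / (j + 1)) := by ring
    _ ≤ C * ((1 - t) ^ (-ε) / ε) := by gcongr
    _ = C / ε * (1 - t) ^ (-ε) := by ring

lemma tsum_le_mul_one_sub_rpow_neg {a : ℕ → ℝ} {C : ℝ} {K : ℕ} (ha0 : ∀ j, 0 ≤ a j)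
    (ha : ∀ j : ℕ, a j ≤ C * ((j : ℝ) + 1) ^ K) {t : ℝ} (ht0 : 0 ≤ t) (ht1 : t < 1) :
    ∑' j, a j * t ^ j ≤ C * K.factorial * (1 - t) ^ (-((K + 1 : ℕ) : ℝ)) := by
  have ht : ‖t‖ < 1 := by rwa [Real.norm_eq_abs, abs_of_nonneg ht0]
  have hC : 0 ≤ C := by simpa using (ha0 0).trans (ha 0)
  have hs := summable_mul_pow_of_abs_le (fun j => (abs_of_nonneg (ha0 j)).trans_le (ha j)) ht
  rw [one_sub_rpow_neg_natCast ht1]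
  refine hasSum_le (fun j => ?_) hs.hasSum
    ((hasSum_choose_mul_geometric_of_norm_lt_one K ht).mul_left _)
  calc a j * t ^ j ≤ C * ((j : ℝ) + 1) ^ K * t ^ j := by gcongr; exact ha j
    _ ≤ C * (K.factorial * ((j + K).choose K : ℝ)) * t ^ j := by
        gcongr; exact succ_pow_le_factorial_mul_choose j K
    _ = _ := by ring

lemma exists_mul_tsum_le_mul_one_sub_rpow {a : ℕ → ℝ} {C : ℝ} {k : ℕ} (ha0 : ∀ j, 0 ≤ a j)
    (ha : ∀ j : ℕ, ((j : ℝ) + 1) * a j ≤ C * ((j : ℝ) + 1) ^ k) {ε : ℝ} (hε : 0 < ε) :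
    ∃ C', ∀ t ∈ Ico (0 : ℝ) 1, t * ∑' j, a j * t ^ j ≤ C' * (1 - t) ^ (-(k + ε)) := by
  rcases k with _ | K
  · exact ⟨C / ε, fun t ⟨ht0, ht1⟩ => by
      simpa using mul_tsum_le_div_mul_one_sub_rpow_neg ha0 (by simpa using ha) hε ht0 ht1⟩
  refine ⟨C * K.factorial, fun t ⟨ht0, ht1⟩ => ?_⟩
  have ha' : ∀ j : ℕ, a j ≤ C * ((j : ℝ) + 1) ^ K := fun j => by
    rw [← mul_le_mul_iff_of_pos_left (by positivity : (0 : ℝ) < j + 1)]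
    exact (ha j).trans_eq (by ring)
  calc t * ∑' j, a j * t ^ j ≤ ∑' j, a j * t ^ j :=
        mul_le_of_le_one_left (tsum_nonneg fun j => mul_nonneg (ha0 j) (by positivity)) ht1.le
    _ ≤ C * K.factorial * (1 - t) ^ (-((K + 1 : ℕ) : ℝ)) :=
        tsum_le_mul_one_sub_rpow_neg ha0 ha' ht0 ht1
    _ ≤ C * K.factorial * (1 - t) ^ (-(((K + 1 : ℕ) : ℝ) + ε)) := by
        have hC : 0 ≤ C := by simpa using (ha0 0).trans (ha' 0)
        exact mul_le_mul_of_nonneg_left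
          (Real.rpow_le_rpow_of_exponent_ge (by linarith) (by linarith) (by linarith))
          (by positivity)

lemma integrableOn_one_sub_rpow_iff {a r : ℝ} (ha : a < 1) :
    IntegrableOn (fun t => (1 - t) ^ r) (Ioo a 1) ↔ -1 < r := by
  have h := IntervalIntegrable.comp_sub_left_iff (f := fun x : ℝ => x ^ r)
    (a := 1 - a) (b := 0) 1
  simp only [sub_sub_self, sub_zero] at h
  rw [← intervalIntegrable_iff_integrableOn_Ioo_of_le ha.le, h, IntervalIntegrable.symm_iff,
    intervalIntegrable_iff_integrableOn_Ioo_of_le (by linarith),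
    intervalIntegral.integrableOn_Ioo_rpow_iff (by linarith)]

lemma integrableOn_of_abs_le_mul_one_sub_rpow {g : ℝ → ℝ} {C r : ℝ}
    (hg : ContinuousOn g (Ioo 0 1)) (hr : -1 < r)
    (hle : ∀ t ∈ Ioo (0 : ℝ) 1, |g t| ≤ C * (1 - t) ^ r) : IntegrableOn g (Ioo 0 1) :=
  (((integrableOn_one_sub_rpow_iff zero_lt_one).mpr hr).const_mul C).mono'
    (hg.aestronglyMeasurable measurableSet_Ioo) ((ae_restrict_iff' measurableSet_Ioo).mpr
      (.of_forall hle))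

lemma neg_one_lt_of_integrableOn_of_mul_one_sub_rpow_le {g : ℝ → ℝ} {a c r : ℝ} (ha : a < 1)
    (hc : 0 < c) (hg : IntegrableOn g (Ioo a 1)) (hle : ∀ t ∈ Ioo a 1, c * (1 - t) ^ r ≤ g t) :
    -1 < r := by
  refine (integrableOn_one_sub_rpow_iff ha).mp ((hg.const_mul c⁻¹).mono' ?_ ?_)
  · refine ContinuousOn.aestronglyMeasurable (fun t ht => ?_) measurableSet_Ioo
    exact (ContinuousAt.rpow_const (by fun_prop) (Or.inl (by linarith [ht.2]))).continuousWithinAt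
  · refine (ae_restrict_iff' measurableSet_Ioo).mpr (.of_forall fun t ht => ?_)
    rw [Real.norm_eq_abs, abs_of_nonneg (Real.rpow_nonneg (by linarith [ht.2]) r),
      le_inv_mul_iff₀ hc]
    exact hle t ht

section GrowthIntegrability

variable {a : ℕ → ℝ} {c C ν α s : ℝ} {k : ℕ}

lemma one_sub_rpow_add_mul_two {t : ℝ} (ht : t < 1) (s x : ℝ) :
    (1 - t) ^ (s + x * 2) = (1 - t) ^ s * ((1 - t) ^ x) ^ 2 := by
  rw [Real.rpow_add (by linarith), ← Real.rpow_mul_natCast (by linarith) x 2, Nat.cast_ofNat]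

lemma lt_of_integrableOn_rpow_mul_one_sub_rpow_mul_sq (hc : 0 < c) (hν : 0 ≤ ν) (hα : 0 ≤ α)
    (hlo : ∀ j : ℕ, c * ((j : ℝ) + 1) ^ k ≤ ((j : ℝ) + 1) * a j)
    (hsum : ∀ t ∈ Ioo (0 : ℝ) 1, Summable fun j => a j * t ^ j)
    (hint : IntegrableOn (fun t => t ^ ν * (1 - t) ^ s * (t ^ α * ∑' j, a j * t ^ j) ^ 2)
      (Ioo 0 1)) :
    2 * (k : ℝ) - 1 < s := by
  set m : ℝ := (1 / 2) ^ ν * ((1 / 2) ^ α * c) ^ 2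
  have hbound : ∀ t ∈ Ioo (1 / 2 : ℝ) 1,
      m * (1 - t) ^ (s + -(k : ℝ) * 2) ≤ t ^ ν * (1 - t) ^ s * (t ^ α * ∑' j, a j * t ^ j) ^ 2 := by
    rintro t ⟨ht0, ht1⟩
    have hh := mul_one_sub_rpow_neg_le_tsum hc.le hlo (by linarith) ht1 (hsum t ⟨by linarith, ht1⟩)
    have hν' : (1 / 2 : ℝ) ^ ν ≤ t ^ ν := Real.rpow_le_rpow (by norm_num) ht0.le hν
    have hα' : (1 / 2 : ℝ) ^ α ≤ t ^ α := Real.rpow_le_rpow (by norm_num) ht0.le hα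
    rw [one_sub_rpow_add_mul_two ht1]
    calc m * ((1 - t) ^ s * ((1 - t) ^ (-(k : ℝ))) ^ 2)
        = (1 / 2) ^ ν * (1 - t) ^ s * ((1 / 2) ^ α * (c * (1 - t) ^ (-(k : ℝ)))) ^ 2 := by ring
      _ ≤ t ^ ν * (1 - t) ^ s * (t ^ α * ∑' j, a j * t ^ j) ^ 2 := by gcongr
  have := neg_one_lt_of_integrableOn_of_mul_one_sub_rpow_le (by norm_num) (by positivity)
    (hint.mono_set (Ioo_subset_Ioo (by norm_num) le_rfl)) hbound
  linarith

lemma integrableOn_rpow_mul_one_sub_rpow_mul_sq_of_lt (hν : 0 ≤ ν) (hα : 1 ≤ α)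
    (ha0 : ∀ j, 0 ≤ a j) (hhi : ∀ j : ℕ, ((j : ℝ) + 1) * a j ≤ C * ((j : ℝ) + 1) ^ k)
    (hs : 2 * (k : ℝ) - 1 < s) :
    IntegrableOn (fun t => t ^ ν * (1 - t) ^ s * (t ^ α * ∑' j, a j * t ^ j) ^ 2)
      (Ioo 0 1) := by
  have habs := abs_le_of_succ_mul_le ha0 hhi
  set ε := (s - (2 * k - 1)) / 4
  obtain ⟨C', hC'⟩ := exists_mul_tsum_le_mul_one_sub_rpow ha0 hhi (ε := ε) (by simp [ε]; linarith)
  have hcont : ContinuousOn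
      (fun t => t ^ ν * (1 - t) ^ s * (t ^ α * ∑' j, a j * t ^ j) ^ 2) (Ioo 0 1) := by
    intro t ⟨ht0, ht1⟩
    have hh := (hasDerivAt_tsum_mul_pow habs (abs_lt.mpr ⟨by linarith, ht1⟩)).continuousAt
    have h1 : 1 - t ≠ 0 := by linarith
    have h2 : t ≠ 0 := ht0.ne'
    exact ContinuousAt.continuousWithinAt (by fun_prop (disch := simp [h1, h2]))
  refine integrableOn_of_abs_le_mul_one_sub_rpow (C := C' ^ 2) (r := s + -(k + ε) * 2)
    hcont (by simp [ε]; linarith) ?_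
  rintro t ⟨ht0, ht1⟩
  have hh0 : 0 ≤ ∑' j, a j * t ^ j := tsum_nonneg fun j => mul_nonneg (ha0 j) (by positivity)
  have hupper : t ^ α * ∑' j, a j * t ^ j ≤ C' * (1 - t) ^ (-(k + ε)) := by
    refine (mul_le_mul_of_nonneg_right ?_ hh0).trans (hC' t ⟨ht0.le, ht1⟩)
    simpa using Real.rpow_le_rpow_of_exponent_ge ht0 ht1.le hα
  rw [abs_of_nonneg (mul_nonneg (mul_nonneg (Real.rpow_nonneg ht0.le _)
    (Real.rpow_nonneg (by linarith) _)) (sq_nonneg _)), one_sub_rpow_add_mul_two ht1]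
  calc t ^ ν * (1 - t) ^ s * (t ^ α * ∑' j, a j * t ^ j) ^ 2
      ≤ 1 * (1 - t) ^ s * (C' * (1 - t) ^ (-(k + ε))) ^ 2 := by
        gcongr
        exact Real.rpow_le_one ht0.le ht1.le hν
    _ = C' ^ 2 * ((1 - t) ^ s * ((1 - t) ^ (-(k + ε))) ^ 2) := by ring

theorem integrableOn_rpow_mul_one_sub_rpow_mul_sq_iff (hc : 0 < c) (hν : 0 ≤ ν) (hα : 1 ≤ α)
    (hlo : ∀ j : ℕ, c * ((j : ℝ) + 1) ^ k ≤ ((j : ℝ) + 1) * a j)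
    (hhi : ∀ j : ℕ, ((j : ℝ) + 1) * a j ≤ C * ((j : ℝ) + 1) ^ k) :
    IntegrableOn (fun t => t ^ ν * (1 - t) ^ s * (t ^ α * ∑' j, a j * t ^ j) ^ 2) (Ioo 0 1) ↔
      2 * (k : ℝ) - 1 < s := by
  have ha0 : ∀ j, 0 ≤ a j := fun j =>
    (mul_nonneg_iff_of_pos_left (by positivity)).mp ((by positivity : 0 ≤ c * _).trans (hlo j))
  refine ⟨lt_of_integrableOn_rpow_mul_one_sub_rpow_mul_sq hc hν (by linarith) hlo fun t ht => ?_,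
    integrableOn_rpow_mul_one_sub_rpow_mul_sq_of_lt hν hα ha0 hhi⟩
  exact summable_mul_pow_of_abs_le (abs_le_of_succ_mul_le ha0 hhi)
    (abs_lt.mpr ⟨by linarith [ht.1], ht.2⟩)

end GrowthIntegrability

noncomputable def hypCoeff (a b c : ℝ) (k : ℕ) : ℝ := poch a k * poch b k / (poch c k * k.factorial)

lemma poch_natCast {m : ℕ} (hm : 0 < m) (j : ℕ) : poch m j = m.ascFactorial j := by
  induction j with
  | zero => simp [poch, (Real.Gamma_pos_of_pos (Nat.cast_pos.mpr hm)).ne']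
  | succ j ih =>
    rw [Nat.ascFactorial_succ, Nat.cast_mul, ← ih, poch, poch, Nat.cast_succ, ← add_assoc,
      Real.Gamma_add_one (by positivity)]
    push_cast
    ring

lemma succ_pow_le_ascFactorial_add {m : ℕ} (hm : 1 ≤ m) (j K : ℕ) :
    (j + 1) ^ K ≤ (j + m).ascFactorial K :=
  (Nat.pow_le_pow_left (by omega) K).trans (Nat.pow_succ_le_ascFactorial _ K)

lemma ascFactorial_add_le_mul_pow {m : ℕ} (hm : 1 ≤ m) (j K : ℕ) :
    (j + m).ascFactorial K ≤ m.ascFactorial K * (j + 1) ^ K := by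
  induction K with
  | zero => simp
  | succ K ih =>
    rw [Nat.ascFactorial_succ, Nat.ascFactorial_succ, pow_succ]
    calc (j + m + K) * (j + m).ascFactorial K
        ≤ ((m + K) * (j + 1)) * (m.ascFactorial K * (j + 1) ^ K) :=
          Nat.mul_le_mul (by nlinarith) ih
      _ = (m + K) * m.ascFactorial K * ((j + 1) ^ K * (j + 1)) := by ring

lemma hypCoeff_natCast_mul_eq {p : ℕ} (hp : 1 ≤ p) (Q n j : ℕ) :
    hypCoeff p (Q + 1 : ℕ) ((p : ℝ) + (Q + 1 : ℕ) + n) j *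
        (Q.factorial * (p + j).ascFactorial (Q + 1 + n))
      = p.ascFactorial (Q + 1 + n) * (j + 1).ascFactorial Q := by
  have h₁ : p.ascFactorial j * (p + j).ascFactorial (Q + 1 + n)
      = p.ascFactorial (Q + 1 + n) * (p + (Q + 1) + n).ascFactorial j := by
    rw [Nat.ascFactorial_mul_ascFactorial, Nat.add_assoc p, Nat.ascFactorial_mul_ascFactorial,
      Nat.add_comm j]
  have h₂ : (Q + 1).ascFactorial j * Q.factorial = j.factorial * (j + 1).ascFactorial Q := by
    rw [Nat.mul_comm, Nat.factorial_mul_ascFactorial, Nat.factorial_mul_ascFactorial, Nat.add_comm]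
  have hc : ((p : ℝ) + (Q + 1 : ℕ) + n) = ((p + (Q + 1) + n : ℕ) : ℝ) := by push_cast; ring
  have hpos : (0 : ℝ) < (p + (Q + 1) + n).ascFactorial j * j.factorial := by
    have : 0 < (p + (Q + 1) + n).ascFactorial j := by
      rw [show p + (Q + 1) + n = p + Q + n + 1 by omega]
      exact Nat.ascFactorial_pos _ _
    positivity
  rw [hypCoeff, hc, poch_natCast (by omega), poch_natCast (by omega), poch_natCast (by omega),
    div_mul_eq_mul_div, div_eq_iff hpos.ne']
  have key : p.ascFactorial j * (Q + 1).ascFactorial j *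
        (Q.factorial * (p + j).ascFactorial (Q + 1 + n))
      = p.ascFactorial (Q + 1 + n) * (j + 1).ascFactorial Q *
        ((p + (Q + 1) + n).ascFactorial j * j.factorial) := by
    calc _ = (p.ascFactorial j * (p + j).ascFactorial (Q + 1 + n)) *
          ((Q + 1).ascFactorial j * Q.factorial) := by ring
      _ = _ := by rw [h₁, h₂]; ring
  exact_mod_cast key

lemma hypCoeff_natCast_mul_succ_pow_mem_Icc {p q : ℕ} (hp : 1 ≤ p) (hq : 1 ≤ q) (n j : ℕ) :
    hypCoeff p q ((p : ℝ) + q + n) j * ((j : ℝ) + 1) ^ (n + 1) ∈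
      Icc (1 / (q - 1).factorial : ℝ) (p.ascFactorial (q + n)) := by
  obtain ⟨Q, rfl⟩ : ∃ Q, q = Q + 1 := ⟨q - 1, by omega⟩
  have hX_lo : ((j : ℝ) + 1) ^ Q * ((j : ℝ) + 1) ^ (n + 1) ≤ (p + j).ascFactorial (Q + 1 + n) := by
    rw [← pow_add, show Q + (n + 1) = Q + 1 + n by ring, Nat.add_comm p]
    exact_mod_cast succ_pow_le_ascFactorial_add hp j _
  have hX_hi : ((p + j).ascFactorial (Q + 1 + n) : ℝ)
      ≤ p.ascFactorial (Q + 1 + n) * (((j : ℝ) + 1) ^ Q * ((j : ℝ) + 1) ^ (n + 1)) := by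
    rw [← pow_add, show Q + (n + 1) = Q + 1 + n by ring, Nat.add_comm p]
    exact_mod_cast ascFactorial_add_le_mul_pow hp j _
  have hB_lo : ((j : ℝ) + 1) ^ Q ≤ (j + 1).ascFactorial Q := by
    exact_mod_cast succ_pow_le_ascFactorial_add le_rfl j Q
  have hB_hi : ((j + 1).ascFactorial Q : ℝ) ≤ Q.factorial * ((j : ℝ) + 1) ^ Q := by
    simpa [Nat.one_ascFactorial] using
      (Nat.cast_le (α := ℝ)).mpr (ascFactorial_add_le_mul_pow le_rfl j Q)
  have h := hypCoeff_natCast_mul_eq hp Q n j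
  set A : ℝ := ↑(p.ascFactorial (Q + 1 + n))
  set B : ℝ := ↑((j + 1).ascFactorial Q)
  set X : ℝ := ↑((p + j).ascFactorial (Q + 1 + n))
  set E : ℝ := ((j : ℝ) + 1) ^ Q
  set F : ℝ := ((j : ℝ) + 1) ^ (n + 1)
  have hEF : 0 < E * F := by positivity
  have hX : 0 < X := hEF.trans_le hX_lo
  have hA : 0 < A := pos_of_mul_pos_left (hX.trans_le hX_hi) hEF.le
  have hQ : (0 : ℝ) < Q.factorial := by positivity
  rw [Nat.add_sub_cancel, eq_div_of_mul_eq (by positivity) h, div_mul_eq_mul_div]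
  constructor
  · rw [div_le_div_iff₀ hQ (by positivity)]
    calc 1 * (Q.factorial * X) ≤ Q.factorial * (A * (E * F)) := by rw [one_mul]; gcongr
      _ ≤ Q.factorial * (A * (B * F)) := by gcongr
      _ = A * B * F * Q.factorial := by ring
  · rw [div_le_iff₀ (by positivity)]
    calc A * B * F ≤ A * (Q.factorial * E) * F := by gcongr
      _ = A * (Q.factorial * (E * F)) := by ring
      _ ≤ A * (Q.factorial * X) := by gcongr

lemma succ_mul_two_mul_add_pow_mul_mem_Icc {x c C α : ℝ} (hc : 0 ≤ c) (hα : 1 ≤ α) {n k j : ℕ}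
    (hx : x * ((j : ℝ) + 1) ^ (n + 1) ∈ Icc c C) :
    ((j : ℝ) + 1) * ((2 * (j + α)) ^ (n + k) * x) ∈
      Icc (c * 2 ^ (n + k) * ((j : ℝ) + 1) ^ k) (C * (2 * α) ^ (n + k) * ((j : ℝ) + 1) ^ k) := by
  have hJ : (0 : ℝ) < j + 1 := by positivity
  set r := 2 * (j + α) / (j + 1)
  have hr_lo : 2 ≤ r := by rw [le_div_iff₀ hJ]; linarith
  have hr_hi : r ≤ 2 * α := by rw [div_le_iff₀ hJ]; nlinarith [j.cast_nonneg (α := ℝ)]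
  have hxJ : 0 ≤ x * ((j : ℝ) + 1) ^ (n + 1) := hc.trans hx.1
  have key : ((j : ℝ) + 1) * ((2 * (j + α)) ^ (n + k) * x)
      = x * ((j : ℝ) + 1) ^ (n + 1) * r ^ (n + k) * ((j : ℝ) + 1) ^ k := by
    simp only [r, div_pow]
    field_simp
    ring
  rw [key]
  exact ⟨by gcongr; exact hx.1, mul_le_mul_of_nonneg_right
    (mul_le_mul hx.2 (pow_le_pow_left₀ (by linarith) hr_hi _) (by positivity) (hxJ.trans hx.2))
    (by positivity)⟩

noncomputable def SpqCoeff (n p q j : ℕ) : ℝ :=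
  Real.Gamma (n + p) * Real.Gamma (n + q) / (Real.Gamma n * Real.Gamma ((n : ℝ) + p + q)) *
    hypCoeff p q ((p : ℝ) + q + n) j

lemma Spq_eq_tsum (n p q : ℕ) (t : ℝ) : Spq n p q t = ∑' j, SpqCoeff n p q j * t ^ j := by
  simp only [Spq, hyp2F1, SpqCoeff, mul_assoc, _root_.tsum_mul_left]
  rfl

lemma exists_SpqCoeff_mul_succ_pow_mem_Icc {n p q : ℕ} (hn : 1 ≤ n) (hp : 1 ≤ p) (hq : 1 ≤ q) :
    ∃ c C : ℝ, 0 < c ∧ ∀ j : ℕ, SpqCoeff n p q j * ((j : ℝ) + 1) ^ (n + 1) ∈ Icc c C := by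
  have hn' : (0 : ℝ) < n := by exact_mod_cast hn
  set κ : ℝ := Real.Gamma (n + p) * Real.Gamma (n + q) /
    (Real.Gamma n * Real.Gamma ((n : ℝ) + p + q))
  have hκ : 0 < κ := by positivity
  refine ⟨κ / (q - 1).factorial, κ * p.ascFactorial (q + n), by positivity, fun j => ?_⟩
  obtain ⟨h₁, h₂⟩ := hypCoeff_natCast_mul_succ_pow_mem_Icc hp hq n j
  simp only [SpqCoeff, mul_assoc]
  exact ⟨by rw [div_eq_mul_one_div]; gcongr, by gcongr⟩

lemma abs_le_of_mul_succ_pow_mem_Icc {x c C : ℝ} (hc : 0 ≤ c) {n j : ℕ}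
    (hx : x * ((j : ℝ) + 1) ^ (n + 1) ∈ Icc c C) : |x| ≤ C := by
  have hx0 : 0 ≤ x := nonneg_of_mul_nonneg_left (hc.trans hx.1) (by positivity)
  rw [abs_of_nonneg hx0]
  exact (le_mul_of_one_le_right hx0 (one_le_pow₀ (by simp))).trans hx.2

theorem statement18_general (n : ℕ) (hn : 1 ≤ n) (s : ℝ) (k p q : ℕ)
    (hp : 1 ≤ p) (hq : 1 ≤ q) :
    MeasureTheory.IntegrableOn
      (fun t => t ^ ((n : ℝ) - 1) * (1 - t) ^ s *
        (opD^[n + k] (fun u => u ^ (((p : ℝ) + q) / 2) * Spq n p q u) t) ^ 2)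
      (Set.Ioo (0:ℝ) 1) ↔ 2 * (k : ℝ) - 1 < s := by
  set α : ℝ := ((p : ℝ) + q) / 2
  have hα : 1 ≤ α := by
    rw [le_div_iff₀ two_pos, one_mul]
    exact_mod_cast (by omega : 2 ≤ p + q)
  obtain ⟨c, C, hc, hx⟩ := exists_SpqCoeff_mul_succ_pow_mem_Icc hn hp hq
  have hiter := eqOn_opD_iterate_rpow_mul_tsum (d := 0)
    (fun j => by simpa using abs_le_of_mul_succ_pow_mem_Icc hc.le (hx j)) α (n + k)
  simp only [Spq_eq_tsum]
  rw [integrableOn_congr_fun (fun t ht => by rw [hiter ht]) measurableSet_Ioo]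
  exact integrableOn_rpow_mul_one_sub_rpow_mul_sq_iff (by positivity) (by simpa using hn) hα
    (fun j => (succ_mul_two_mul_add_pow_mul_mem_Icc hc.le hα (hx j)).1)
    (fun j => (succ_mul_two_mul_add_pow_mul_mem_Icc hc.le hα (hx j)).2)

/-- The integral defining `c_{pq,n+k}(s)` is finite iff `s > 2k - 1`. -/
theorem statement18 (n : ℕ) (hn : 1 ≤ n) (s : ℝ) (hs : -1 < s) (k p q : ℕ)
    (hp : 1 ≤ p) (hq : 1 ≤ q) :
    MeasureTheory.IntegrableOn
      (fun t => t ^ ((n : ℝ) - 1) * (1 - t) ^ s *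
        (opD^[n + k] (fun u => u ^ (((p : ℝ) + q) / 2) * Spq n p q u) t) ^ 2)
      (Set.Ioo (0:ℝ) 1) ↔ 2 * (k : ℝ) - 1 < s :=
  statement18_general n hn s k p q hp hq
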